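/- arXiv:2211.02974 — 9 statements merged into one kernel-verified Lean document; each statement's English description precedes it below -/
import Mathlib

section
/- Let (B,S) be an S5-subordination algebra. The set of round ideals of (B,S), ordered by inclusion, is closed under finite intersections and arbitrary joins in the frame of ideals of B; in particular, the intersection of two round ideals is a round ideal, and the ideal generated by a union of round ideals is a round ideal. -/
open Set

/-- Image of a set under a relation: `S[X] = {b | ∃ x ∈ X, x S b}`. -/
def relImg {B₁ B₂ : Type*} (S : B₁ → B₂ → Prop) (X : Set B₁) : Set B₂ :=
  {b | ∃ x ∈ X, S x b}

/-- Preimage of a set under a relation: `S⁻¹[X] = {a | ∃ x ∈ X, a S x}`. -/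
def relPre {B₁ B₂ : Type*} (S : B₁ → B₂ → Prop) (X : Set B₂) : Set B₁ :=
  {a | ∃ x ∈ X, S a x}

/-- Relation composition: `a (T₂ ∘ T₁) c` iff `∃ b, a T₁ b ∧ b T₂ c`. -/
def relComp {B₁ B₂ B₃ : Type*} (T₂ : B₂ → B₃ → Prop) (T₁ : B₁ → B₂ → Prop) :
    B₁ → B₃ → Prop :=
  fun a c => ∃ b, T₁ a b ∧ T₂ b c

/-- Pointwise complement of a set: `¬X = {¬x | x ∈ X}`. -/
def complSet {B : Type*} [BooleanAlgebra B] (X : Set B) : Set B := (·ᶜ) '' X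

/-- A subordination between boolean algebras (axioms S1–S4). -/
structure IsSubord {B₁ B₂ : Type*} [BooleanAlgebra B₁] [BooleanAlgebra B₂]
    (T : B₁ → B₂ → Prop) : Prop where
  rel_bot : T ⊥ ⊥
  rel_top : T ⊤ ⊤
  sup_left : ∀ a b c, T a c → T b c → T (a ⊔ b) c
  inf_right : ∀ a c d, T a c → T a d → T a (c ⊓ d)
  mono : ∀ a b c d, a ≤ b → T b c → c ≤ d → T a d

/-- An S5-subordination on a boolean algebra (axioms S1–S7). -/
structure IsS5Sub {B : Type*} [BooleanAlgebra B] (S : B → B → Prop)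
    extends IsSubord S : Prop where
  le_of_rel : ∀ a b, S a b → a ≤ b
  compl_rel : ∀ a b, S a b → S bᶜ aᶜ
  dense : ∀ a b, S a b → ∃ c, S a c ∧ S c b

/-- A compatible subordination between S5-subordination algebras. -/
def IsCompat {B₁ B₂ : Type*} [BooleanAlgebra B₁] [BooleanAlgebra B₂]
    (S₁ : B₁ → B₁ → Prop) (S₂ : B₂ → B₂ → Prop) (T : B₁ → B₂ → Prop) : Prop :=
  IsSubord T ∧ relComp S₂ T = T ∧ relComp T S₁ = T

/-- Ideal of a boolean algebra (as a set). -/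
def IsIdeal {B : Type*} [BooleanAlgebra B] (I : Set B) : Prop :=
  ⊥ ∈ I ∧ (∀ a b : B, a ≤ b → b ∈ I → a ∈ I) ∧ (∀ a b : B, a ∈ I → b ∈ I → a ⊔ b ∈ I)

/-- Round ideal: an ideal with `I = S⁻¹[I]`. -/
def IsRoundIdeal {B : Type*} [BooleanAlgebra B] (S : B → B → Prop) (I : Set B) : Prop :=
  IsIdeal I ∧ relPre S I = I

/-- The ideal generated by a set: intersection of all ideals containing it. -/
def idealGen {B : Type*} [BooleanAlgebra B] (X : Set B) : Set B :=
  ⋂₀ {J | IsIdeal J ∧ X ⊆ J}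

/-- The pseudocomplement of a round ideal: `I* = ¬S[U(I)]`. -/
def pstar {B : Type*} [BooleanAlgebra B] (S : B → B → Prop) (I : Set B) : Set B :=
  complSet (relImg S (upperBounds I))

/-- The well-inside relation on round ideals: `I ≺ J` iff `U(I) ∩ J ≠ ∅`. -/
def precR {B : Type*} [BooleanAlgebra B] (I J : Set B) : Prop :=
  (upperBounds I ∩ J).Nonempty

/-- Normal round ideal: a round ideal with `I = I**`. -/
def IsNormalRoundIdeal {B : Type*} [BooleanAlgebra B] (S : B → B → Prop) (I : Set B) : Prop :=
  IsRoundIdeal S I ∧ pstar S (pstar S I) = I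

/-- The dual of a subordination: `b T̃ a` iff `¬a T ¬b`. -/
def relDual {B₁ B₂ : Type*} [BooleanAlgebra B₁] [BooleanAlgebra B₂]
    (T : B₁ → B₂ → Prop) : B₂ → B₁ → Prop :=
  fun b a => T aᶜ bᶜ

/-- Continuity of a compatible subordination. -/
def IsContinuousSub {B₁ B₂ : Type*} [BooleanAlgebra B₁] [BooleanAlgebra B₂]
    (S₁ : B₁ → B₁ → Prop) (S₂ : B₂ → B₂ → Prop) (T : B₁ → B₂ → Prop) : Prop :=
  ∀ b₁ b₂, S₂ b₁ b₂ → ∃ a, relDual T b₁ a ∧ ∀ a', relDual T b₂ a' → S₁ a a'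

/-- Functional subordination: `T̃ ∘ T ⊆ S₁` and `S₂ ⊆ T ∘ T̃`. -/
def IsFunctionalSub {B₁ B₂ : Type*} [BooleanAlgebra B₁] [BooleanAlgebra B₂]
    (S₁ : B₁ → B₁ → Prop) (S₂ : B₂ → B₂ → Prop) (T : B₁ → B₂ → Prop) : Prop :=
  (∀ a a', relComp (relDual T) T a a' → S₁ a a') ∧
  (∀ b b', S₂ b b' → relComp T (relDual T) b b')

/-! Because `S` is contained in `≤`, an ideal `I` is round as soon as `I ⊆ S⁻¹[I]`. For `I ∩ J`,
`a S b` and `a S c` with `b ∈ I`, `c ∈ J` give `a S (b ⊓ c)`. For joins, `S⁻¹[K]` is an ideal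
whenever `K` is, so with `K` the ideal generated by `⋃ 𝒮`, `S⁻¹[K]` is an ideal containing every
round `I = S⁻¹[I] ∈ 𝒮`, hence containing `K`. -/

theorem relPre_mono {B₁ B₂ : Type*} {S : B₁ → B₂ → Prop} {X Y : Set B₂} (hXY : X ⊆ Y) :
    relPre S X ⊆ relPre S Y :=
  fun _ ⟨x, hx, hax⟩ => ⟨x, hXY hx, hax⟩

section

variable {B : Type*} [BooleanAlgebra B] {S : B → B → Prop} {I J X : Set B}

theorem IsIdeal.inter (hI : IsIdeal I) (hJ : IsIdeal J) : IsIdeal (I ∩ J) :=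
  ⟨⟨hI.1, hJ.1⟩, fun a b hab hb => ⟨hI.2.1 a b hab hb.1, hJ.2.1 a b hab hb.2⟩,
    fun a b ha hb => ⟨hI.2.2 a b ha.1 hb.1, hJ.2.2 a b ha.2 hb.2⟩⟩

theorem isIdeal_idealGen (X : Set B) : IsIdeal (idealGen X) :=
  ⟨fun _ hJ => hJ.1.1, fun a b hab hb J hJ => hJ.1.2.1 a b hab (hb J hJ),
    fun a b ha hb J hJ => hJ.1.2.2 a b (ha J hJ) (hb J hJ)⟩

theorem subset_idealGen (X : Set B) : X ⊆ idealGen X :=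
  fun _ hx _ hJ => hJ.2 hx

theorem idealGen_subset (hJ : IsIdeal J) (hXJ : X ⊆ J) : idealGen X ⊆ J :=
  sInter_subset_of_mem ⟨hJ, hXJ⟩

theorem IsIdeal.relPre (hS : IsSubord S) (hI : IsIdeal I) : IsIdeal (relPre S I) := by
  refine ⟨⟨⊥, hI.1, hS.rel_bot⟩, ?_, ?_⟩
  · rintro a b hab ⟨c, hc, hbc⟩
    exact ⟨c, hc, hS.mono a b c c hab hbc le_rfl⟩
  · rintro a b ⟨c, hc, hac⟩ ⟨d, hd, hbd⟩
    exact ⟨c ⊔ d, hI.2.2 c d hc hd, hS.sup_left a b _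
      (hS.mono a a c _ le_rfl hac le_sup_left) (hS.mono b b d _ le_rfl hbd le_sup_right)⟩

theorem relPre_subset (hS : ∀ a b, S a b → a ≤ b) (hI : IsIdeal I) : relPre S I ⊆ I :=
  fun a ⟨x, hx, hax⟩ => hI.2.1 a x (hS a x hax) hx

theorem isRoundIdeal_iff_subset_relPre (hS : ∀ a b, S a b → a ≤ b) :
    IsRoundIdeal S I ↔ IsIdeal I ∧ I ⊆ relPre S I :=
  ⟨fun ⟨hI, hround⟩ => ⟨hI, hround.symm.subset⟩,
    fun ⟨hI, hsub⟩ => ⟨hI, (relPre_subset hS hI).antisymm hsub⟩⟩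

theorem inter_subset_relPre_inter (hS : IsSubord S) (hI : IsIdeal I) (hJ : IsIdeal J)
    (hIS : I ⊆ relPre S I) (hJS : J ⊆ relPre S J) : I ∩ J ⊆ relPre S (I ∩ J) := by
  rintro a ⟨haI, haJ⟩
  obtain ⟨b, hbI, hab⟩ := hIS haI
  obtain ⟨c, hcJ, hac⟩ := hJS haJ
  exact ⟨b ⊓ c, ⟨hI.2.1 _ b inf_le_left hbI, hJ.2.1 _ c inf_le_right hcJ⟩,
    hS.inf_right a b c hab hac⟩

theorem IsRoundIdeal.inter (hS : IsS5Sub S) (hI : IsRoundIdeal S I) (hJ : IsRoundIdeal S J) :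
    IsRoundIdeal S (I ∩ J) := by
  rw [isRoundIdeal_iff_subset_relPre hS.le_of_rel] at hI hJ ⊢
  exact ⟨hI.1.inter hJ.1, inter_subset_relPre_inter hS.toIsSubord hI.1 hJ.1 hI.2 hJ.2⟩

theorem isRoundIdeal_idealGen_sUnion (hS : IsS5Sub S) {𝒮 : Set (Set B)}
    (h𝒮 : ∀ I ∈ 𝒮, IsRoundIdeal S I) : IsRoundIdeal S (idealGen (⋃₀ 𝒮)) := by
  have hgen := isIdeal_idealGen (⋃₀ 𝒮)
  refine (isRoundIdeal_iff_subset_relPre hS.le_of_rel).2 ⟨hgen, idealGen_subset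
    (hgen.relPre hS.toIsSubord) (sUnion_subset fun I hI => ?_)⟩
  calc I = relPre S I := (h𝒮 I hI).2.symm
    _ ⊆ relPre S (idealGen (⋃₀ 𝒮)) :=
      relPre_mono ((subset_sUnion_of_mem hI).trans (subset_idealGen _))

end

/-- round ideals are closed under binary intersections and under
joins (the ideal generated by a union of round ideals is round). -/
theorem stmt2 {B : Type*} [BooleanAlgebra B] (S : B → B → Prop) (hS : IsS5Sub S) :
    (∀ I J : Set B, IsRoundIdeal S I → IsRoundIdeal S J → IsRoundIdeal S (I ∩ J)) ∧
    (∀ 𝒮 : Set (Set B), (∀ I ∈ 𝒮, IsRoundIdeal S I) →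
      IsRoundIdeal S (idealGen (⋃₀ 𝒮))) :=
  ⟨fun _ _ => IsRoundIdeal.inter hS, fun _ => isRoundIdeal_idealGen_sUnion hS⟩
end

section
/- Let (B,S) be an S5-subordination algebra and I a round ideal. In the frame of round ideals, the pseudocomplement of I is I* = S⁻¹[¬U(I)] = ¬S[U(I)], where U(I) is the set of upper bounds of I. -/
open Set

/-!
Complementation turns the axiom `a S b → ¬b S ¬a` into `S⁻¹[¬X] = ¬S[X]`. Since `U(I)` is
upward closed and closed under finite meets, `¬S[U(I)]` is an ideal, and interpolation makes it
round. An element `a` of `I ∩ I*` satisfies `a ≤ u S ¬a` for some `u ∈ U(I)`, forcing `a = ⊥`.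
Conversely, if `J` is round with `I ∩ J = {⊥}`, each `a ∈ J` lies `S`-below some `b ∈ J`, and
`¬b ∈ U(I)` because `i ⊓ b ∈ I ∩ J` for every `i ∈ I`; hence `a ∈ S⁻¹[¬U(I)] = I*`.
-/

section

variable {B : Type*} [BooleanAlgebra B] {S : B → B → Prop}

theorem mem_complSet_iff {X : Set B} {a : B} : a ∈ complSet X ↔ aᶜ ∈ X :=
  mem_image_iff_of_inverse compl_compl compl_compl

theorem IsS5Sub.relPre_complSet (hS : IsS5Sub S) (X : Set B) :
    relPre S (complSet X) = complSet (relImg S X) := by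
  ext a
  simp only [relPre, relImg, complSet, mem_image, mem_ofPred_eq]
  constructor
  · rintro ⟨_, ⟨u, hu, rfl⟩, h⟩
    exact ⟨aᶜ, ⟨u, hu, by simpa using hS.compl_rel _ _ h⟩, compl_compl a⟩
  · rintro ⟨_, ⟨u, hu, h⟩, rfl⟩
    exact ⟨uᶜ, ⟨u, hu, rfl⟩, hS.compl_rel _ _ h⟩

theorem IsS5Sub.relPre_relPre (hS : IsS5Sub S) (X : Set B) :
    relPre S (relPre S X) = relPre S X := by
  ext a
  constructor
  · rintro ⟨b, ⟨x, hx, hbx⟩, hab⟩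
    exact ⟨x, hx, hS.mono _ _ _ _ (hS.le_of_rel _ _ hab) hbx le_rfl⟩
  · rintro ⟨x, hx, hax⟩
    obtain ⟨c, hac, hcx⟩ := hS.dense _ _ hax
    exact ⟨c, ⟨x, hx, hcx⟩, hac⟩

theorem IsSubord.isIdeal_pstar (hS : IsSubord S) (I : Set B) : IsIdeal (pstar S I) := by
  simp only [pstar, IsIdeal, mem_complSet_iff, relImg, mem_ofPred_eq]
  refine ⟨⟨⊤, fun _ _ => le_top, by simpa using hS.rel_top⟩, ?_, ?_⟩
  · rintro a b hab ⟨u, hu, hub⟩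
    exact ⟨u, hu, hS.mono _ _ _ _ le_rfl hub (compl_le_compl hab)⟩
  · rintro a b ⟨u, hu, hua⟩ ⟨v, hv, hvb⟩
    refine ⟨u ⊓ v, fun i hi => le_inf (hu hi) (hv hi), ?_⟩
    rw [compl_sup]
    exact hS.inf_right _ _ _ (hS.mono _ _ _ _ inf_le_left hua le_rfl)
      (hS.mono _ _ _ _ inf_le_right hvb le_rfl)

theorem IsS5Sub.isRoundIdeal_pstar (hS : IsS5Sub S) (I : Set B) :
    IsRoundIdeal S (pstar S I) :=
  ⟨hS.isIdeal_pstar I, by rw [pstar, ← hS.relPre_complSet, hS.relPre_relPre]⟩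

theorem IsS5Sub.inter_pstar_eq_singleton_bot (hS : IsS5Sub S) {I : Set B} (hI : IsIdeal I) :
    I ∩ pstar S I = {⊥} := by
  refine eq_singleton_iff_unique_mem.mpr ⟨⟨hI.1, (hS.isIdeal_pstar I).1⟩, ?_⟩
  rintro a ⟨haI, ha⟩
  obtain ⟨u, hu, hua⟩ := mem_complSet_iff.mp ha
  have hau : a ≤ u := hu haI
  have hau' : a ≤ uᶜ := le_compl_comm.mp (hS.le_of_rel _ _ hua)
  simpa using le_inf hau hau'

theorem compl_mem_upperBounds_of_inter_eq_singleton_bot {I J : Set B} (hI : IsIdeal I)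
    (hJ : IsIdeal J) (hIJ : I ∩ J = {⊥}) {b : B} (hb : b ∈ J) : bᶜ ∈ upperBounds I := by
  intro i hi
  have hib : i ⊓ b ∈ I ∩ J := ⟨hI.2.1 _ _ inf_le_left hi, hJ.2.1 _ _ inf_le_right hb⟩
  rw [hIJ, mem_singleton_iff] at hib
  exact le_compl_iff_disjoint_right.mpr (disjoint_iff.mpr hib)

theorem IsS5Sub.subset_pstar_of_inter_eq_singleton_bot (hS : IsS5Sub S) {I J : Set B}
    (hI : IsIdeal I) (hJ : IsRoundIdeal S J) (hIJ : I ∩ J = {⊥}) : J ⊆ pstar S I := by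
  intro a ha
  rw [← hJ.2] at ha
  obtain ⟨b, hb, hab⟩ := ha
  rw [pstar, ← hS.relPre_complSet]
  exact ⟨b, mem_complSet_iff.mpr
    (compl_mem_upperBounds_of_inter_eq_singleton_bot hI hJ.1 hIJ hb), hab⟩

end

/-- the pseudocomplement of a round ideal `I` in the frame of round
ideals is `I* = S⁻¹[¬U(I)] = ¬S[U(I)]`: it is the largest round ideal whose
intersection with `I` is `{⊥}`. -/
theorem stmt3 {B : Type*} [BooleanAlgebra B] (S : B → B → Prop) (hS : IsS5Sub S)
    (I : Set B) (hI : IsRoundIdeal S I) :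
    pstar S I = relPre S (complSet (upperBounds I)) ∧
    IsRoundIdeal S (pstar S I) ∧
    I ∩ pstar S I = {⊥} ∧
    (∀ J : Set B, IsRoundIdeal S J → I ∩ J = {⊥} → J ⊆ pstar S I) :=
  ⟨(hS.relPre_complSet _).symm, hS.isRoundIdeal_pstar I, hS.inter_pstar_eq_singleton_bot hI.1,
    fun _ hJ hIJ => hS.subset_pstar_of_inter_eq_singleton_bot hI.1 hJ hIJ⟩
end

section
/- Let T be a compatible subordination between S5-subordination algebras (B₁,S₁) and (B₂,S₂). Then the map I ↦ T⁻¹[I] from round ideals of B₂ to round ideals of B₁ is well defined and preserves directed joins and finite meets (i.e., is a preframe homomorphism). -/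
open Set

section Subordination

variable {B₁ B₂ : Type*}

lemma relPre_sUnion (T : B₁ → B₂ → Prop) (𝒮 : Set (Set B₂)) :
    relPre T (⋃₀ 𝒮) = ⋃₀ (relPre T '' 𝒮) := by
  ext a
  constructor
  · rintro ⟨b, ⟨I, hI, hbI⟩, hab⟩
    exact ⟨relPre T I, ⟨I, hI, rfl⟩, b, hbI, hab⟩
  · rintro ⟨-, ⟨I, hI, rfl⟩, b, hbI, hab⟩
    exact ⟨b, ⟨I, hI, hbI⟩, hab⟩

lemma relPre_relComp {B₃ : Type*} (T₂ : B₂ → B₃ → Prop) (T₁ : B₁ → B₂ → Prop) (X : Set B₃) :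
    relPre (relComp T₂ T₁) X = relPre T₁ (relPre T₂ X) := by
  ext a
  constructor
  · rintro ⟨c, hc, b, hab, hbc⟩
    exact ⟨b, ⟨c, hc, hbc⟩, hab⟩
  · rintro ⟨b, ⟨c, hc, hbc⟩, hab⟩
    exact ⟨c, hc, b, hab, hbc⟩

lemma IsIdeal.isLowerSet [BooleanAlgebra B₂] {I : Set B₂} (hI : IsIdeal I) : IsLowerSet I :=
  fun _ _ hba hb => hI.2.1 _ _ hba hb

variable [BooleanAlgebra B₁] [BooleanAlgebra B₂] {T : B₁ → B₂ → Prop}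

lemma IsSubord.isIdeal_relPre (hT : IsSubord T) {I : Set B₂} (hI : IsIdeal I) :
    IsIdeal (relPre T I) := by
  obtain ⟨hbot, hdown, hsup⟩ := hI
  refine ⟨⟨⊥, hbot, hT.rel_bot⟩, ?_, ?_⟩
  · rintro a b hab ⟨c, hc, hbc⟩
    exact ⟨c, hc, hT.mono a b c c hab hbc le_rfl⟩
  · rintro a b ⟨c, hc, hac⟩ ⟨d, hd, hbd⟩
    exact ⟨c ⊔ d, hsup c d hc hd, hT.sup_left a b (c ⊔ d)
      (hT.mono a a c (c ⊔ d) le_rfl hac le_sup_left)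
      (hT.mono b b d (c ⊔ d) le_rfl hbd le_sup_right)⟩

lemma IsSubord.relPre_univ (hT : IsSubord T) : relPre T (univ : Set B₂) = univ :=
  eq_univ_of_forall fun a => ⟨⊤, trivial, hT.mono a ⊤ ⊤ ⊤ le_top hT.rel_top le_rfl⟩

lemma IsSubord.relPre_inter (hT : IsSubord T) {I J : Set B₂} (hI : IsLowerSet I)
    (hJ : IsLowerSet J) : relPre T (I ∩ J) = relPre T I ∩ relPre T J := by
  ext a
  constructor
  · rintro ⟨b, ⟨hbI, hbJ⟩, hab⟩
    exact ⟨⟨b, hbI, hab⟩, ⟨b, hbJ, hab⟩⟩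
  · rintro ⟨⟨c, hc, hac⟩, ⟨d, hd, had⟩⟩
    exact ⟨c ⊓ d, ⟨hI inf_le_left hc, hJ inf_le_right hd⟩, hT.inf_right a c d hac had⟩

lemma IsSubord.isRoundIdeal_relPre {S₁ : B₁ → B₁ → Prop} (hT : IsSubord T)
    (hTS : relComp T S₁ = T) {I : Set B₂} (hI : IsIdeal I) :
    IsRoundIdeal S₁ (relPre T I) :=
  ⟨hT.isIdeal_relPre hI, by rw [← relPre_relComp, hTS]⟩

end Subordination

theorem stmt6_general {B₁ B₂ : Type*} [BooleanAlgebra B₁] [BooleanAlgebra B₂]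
    (S₁ : B₁ → B₁ → Prop) (S₂ : B₂ → B₂ → Prop)
    (T : B₁ → B₂ → Prop) (hT : IsCompat S₁ S₂ T) :
    (∀ I : Set B₂, IsRoundIdeal S₂ I → IsRoundIdeal S₁ (relPre T I)) ∧
    relPre T (Set.univ : Set B₂) = Set.univ ∧
    (∀ I J : Set B₂, IsRoundIdeal S₂ I → IsRoundIdeal S₂ J →
      relPre T (I ∩ J) = relPre T I ∩ relPre T J) ∧
    (∀ 𝒮 : Set (Set B₂), 𝒮.Nonempty → DirectedOn (· ⊆ ·) 𝒮 →
      (∀ I ∈ 𝒮, IsRoundIdeal S₂ I) →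
      relPre T (⋃₀ 𝒮) = ⋃₀ (relPre T '' 𝒮)) := by
  obtain ⟨hT, -, hTS⟩ := hT
  exact ⟨fun I hI => hT.isRoundIdeal_relPre hTS hI.1, hT.relPre_univ,
    fun I J hI hJ => hT.relPre_inter hI.1.isLowerSet hJ.1.isLowerSet,
    fun 𝒮 _ _ _ => relPre_sUnion T 𝒮⟩

/-- for a compatible subordination `T`, the map `I ↦ T⁻¹[I]` is a
well-defined preframe homomorphism between the frames of round ideals. -/
theorem stmt6 {B₁ B₂ : Type*} [BooleanAlgebra B₁] [BooleanAlgebra B₂]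
    (S₁ : B₁ → B₁ → Prop) (S₂ : B₂ → B₂ → Prop)
    (hS₁ : IsS5Sub S₁) (hS₂ : IsS5Sub S₂)
    (T : B₁ → B₂ → Prop) (hT : IsCompat S₁ S₂ T) :
    (∀ I : Set B₂, IsRoundIdeal S₂ I → IsRoundIdeal S₁ (relPre T I)) ∧
    relPre T (Set.univ : Set B₂) = Set.univ ∧
    (∀ I J : Set B₂, IsRoundIdeal S₂ I → IsRoundIdeal S₂ J →
      relPre T (I ∩ J) = relPre T I ∩ relPre T J) ∧
    (∀ 𝒮 : Set (Set B₂), 𝒮.Nonempty → DirectedOn (· ⊆ ·) 𝒮 →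
      (∀ I ∈ 𝒮, IsRoundIdeal S₂ I) →
      relPre T (⋃₀ 𝒮) = ⋃₀ (relPre T '' 𝒮)) :=
  stmt6_general S₁ S₂ T hT
end

section
/- Let L and M be compact regular frames and □ : L → M a preframe homomorphism. Define the relation T from the booleanization of M to the booleanization of L by b T a iff b ≺ □a (well-inside in M). Then T is a compatible subordination: it is a subordination relation satisfying ≺_L ∘ T = T = T ∘ ≺_M (restricting ≺ to the booleanizations). -/
/-!
The subordination axioms are the lattice properties of `≺` (finite joins on the left, finite
meets on the right, weakening on both sides) pushed through the monotone, meet-preserving `□`.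
Compatibility is interpolation: if `b ≺ □a`, write `a` as the directed join of the `c ≺ a`;
since `□` preserves directed joins and `1` is compact in `M`, some single `c ≺ a` already has
`b ≺ □c`. Replacing `c` by `c**` moves it into the booleanization without affecting `c ≺ a`.
-/

open Set

/-- Pseudocomplement in a frame. -/
def pc {L : Type*} [Order.Frame L] (a : L) : L := sSup {x | a ⊓ x = ⊥}

/-- The well-inside relation in a frame: `a ≺ b` iff `a* ⊔ b = ⊤`. -/
def wI {L : Type*} [Order.Frame L] (a b : L) : Prop := pc a ⊔ b = ⊤

/-- The booleanization of a frame: the set of its regular elements `a = a**`. -/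
def Bool' (L : Type*) [Order.Frame L] : Set L := {a | pc (pc a) = a}

/-- A frame is regular if every element is the join of the elements well inside it. -/
def IsRegularFrame (L : Type*) [Order.Frame L] : Prop :=
  ∀ a : L, a = sSup {x | wI x a}

/-- A preframe homomorphism preserves finite meets and directed joins. -/
def IsPreframeHom {L M : Type*} [Order.Frame L] [Order.Frame M] (f : L → M) : Prop :=
  f ⊤ = ⊤ ∧ (∀ a b : L, f (a ⊓ b) = f a ⊓ f b) ∧
    ∀ s : Set L, s.Nonempty → DirectedOn (· ≤ ·) s → f (sSup s) = sSup (f '' s)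

/-- A frame homomorphism preserves arbitrary joins and finite meets. -/
def IsFrameHom {L M : Type*} [Order.Frame L] [Order.Frame M] (f : L → M) : Prop :=
  f ⊤ = ⊤ ∧ (∀ a b : L, f (a ⊓ b) = f a ⊓ f b) ∧
    ∀ s : Set L, f (sSup s) = sSup (f '' s)

section WellInside

variable {L : Type*} [Order.Frame L]

lemma pc_eq_compl (a : L) : pc a = aᶜ :=
  le_antisymm (sSup_le fun _ hx => le_compl_iff_disjoint_left.mpr (disjoint_iff.mpr hx))
    (le_sSup (disjoint_iff.mp (le_compl_iff_disjoint_left.mp le_rfl)))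

lemma wI_iff {a b : L} : wI a b ↔ aᶜ ⊔ b = ⊤ := by
  rw [wI, pc_eq_compl]

lemma compl_compl_mem_bool' (a : L) : aᶜᶜ ∈ Bool' L := by
  show pc (pc aᶜᶜ) = aᶜᶜ
  simp only [pc_eq_compl, compl_compl_compl]

lemma wI.le {a b : L} (h : wI a b) : a ≤ b :=
  himp_eq_top_iff.mp (top_le_iff.mp (wI_iff.mp h ▸ compl_sup_le_himp))

lemma wI.mono_left {a a' b : L} (h : wI a b) (ha : a' ≤ a) : wI a' b :=
  wI_iff.mpr (top_le_iff.mp (wI_iff.mp h ▸ sup_le_sup_right (compl_anti ha) b))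

lemma wI.mono_right {a b b' : L} (h : wI a b) (hb : b ≤ b') : wI a b' :=
  wI_iff.mpr (top_le_iff.mp (wI_iff.mp h ▸ sup_le_sup_left hb aᶜ))

lemma wI_bot_left (b : L) : wI ⊥ b := by
  rw [wI_iff, compl_bot, top_sup_eq]

lemma wI_top_right (a : L) : wI a ⊤ := by
  rw [wI_iff, sup_top_eq]

lemma wI.sup_left {a a' b : L} (h : wI a b) (h' : wI a' b) : wI (a ⊔ a') b := by
  rw [wI_iff] at *
  rw [compl_sup, sup_inf_right, h, h', inf_top_eq]

lemma wI.inf_right {a b b' : L} (h : wI a b) (h' : wI a b') : wI a (b ⊓ b') := by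
  rw [wI_iff] at *
  rw [sup_inf_left, h, h', inf_top_eq]

lemma wI_compl_compl_left {a b : L} : wI aᶜᶜ b ↔ wI a b := by
  rw [wI_iff, wI_iff, compl_compl_compl]

lemma nonempty_wI_left (b : L) : {a : L | wI a b}.Nonempty :=
  ⟨⊥, wI_bot_left b⟩

lemma directedOn_wI_left (b : L) : DirectedOn (· ≤ ·) {a : L | wI a b} :=
  fun a ha a' ha' => ⟨a ⊔ a', ha.sup_left ha', le_sup_left, le_sup_right⟩

lemma exists_wI_of_wI_sSup (hc : IsCompactElement (⊤ : L)) {b : L} {D : Set L}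
    (hne : D.Nonempty) (hD : DirectedOn (· ≤ ·) D) (h : wI b (sSup D)) :
    ∃ d ∈ D, wI b d := by
  have hdir : DirectedOn (· ≤ ·) ((bᶜ ⊔ ·) '' D) :=
    hD.mono_comp fun _ _ hxy => sup_le_sup_left hxy bᶜ
  have htop : ⊤ ≤ sSup ((bᶜ ⊔ ·) '' D) := by
    rw [← wI_iff.mp h]
    obtain ⟨d, hd⟩ := hne
    exact sup_le (le_sup_left.trans (le_sSup (mem_image_of_mem _ hd)))
      (sSup_le fun x hx => le_sup_right.trans (le_sSup (mem_image_of_mem _ hx)))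
  obtain ⟨_, ⟨d, hd, rfl⟩, hle⟩ :=
    (CompleteLattice.isCompactElement_iff_le_of_directed_sSup_le L ⊤).mp hc _ (hne.image _) hdir
      htop
  exact ⟨d, hd, wI_iff.mpr (top_le_iff.mp hle)⟩

lemma IsRegularFrame.exists_wI_wI (hr : IsRegularFrame L) (hc : IsCompactElement (⊤ : L))
    {b a : L} (h : wI b a) : ∃ c, wI b c ∧ wI c a := by
  rw [hr a] at h
  obtain ⟨c, hca, hbc⟩ := exists_wI_of_wI_sSup hc (nonempty_wI_left a) (directedOn_wI_left a) h
  exact ⟨c, hbc, hca⟩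

end WellInside

section Preframe

variable {L M : Type*} [Order.Frame L] [Order.Frame M] {f : L → M}

lemma IsPreframeHom.monotone (hf : IsPreframeHom f) : Monotone f := fun a b hab => by
  simpa only [inf_eq_left.mpr hab, ← hf.2.1 a b] using (inf_le_right : f a ⊓ f b ≤ f b)

lemma IsPreframeHom.exists_wI_wI (hf : IsPreframeHom f) (hr : IsRegularFrame L)
    (hc : IsCompactElement (⊤ : M)) {b : M} {a : L} (h : wI b (f a)) :
    ∃ c, wI b (f c) ∧ wI c a := by
  rw [hr a, hf.2.2 _ (nonempty_wI_left a) (directedOn_wI_left a)] at h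
  obtain ⟨_, ⟨c, hca, rfl⟩, hbc⟩ := exists_wI_of_wI_sSup hc
    ((nonempty_wI_left a).image f)
    ((directedOn_wI_left a).mono_comp fun _ _ => (hf.monotone ·)) h
  exact ⟨c, hbc, hca⟩

end Preframe

theorem stmt7_general {L M : Type*} [Order.Frame L] [Order.Frame M]
    (hrL : IsRegularFrame L)
    (hcM : IsCompactElement (⊤ : M)) (hrM : IsRegularFrame M)
    (box : L → M) (hbox : IsPreframeHom box) :
    -- T is a subordination on the booleanizations (axioms S1–S4):
    wI (⊥ : M) (box ⊥) ∧
    wI (⊤ : M) (box ⊤) ∧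
    (∀ b b' : M, b ∈ Bool' M → b' ∈ Bool' M → ∀ a : L, a ∈ Bool' L →
      wI b (box a) → wI b' (box a) → wI (pc (pc (b ⊔ b'))) (box a)) ∧
    (∀ b : M, b ∈ Bool' M → ∀ a a' : L, a ∈ Bool' L → a' ∈ Bool' L →
      wI b (box a) → wI b (box a') → wI b (box (a ⊓ a'))) ∧
    (∀ b b' : M, b ∈ Bool' M → b' ∈ Bool' M → ∀ a a' : L, a ∈ Bool' L → a' ∈ Bool' L →
      b ≤ b' → wI b' (box a) → a ≤ a' → wI b (box a')) ∧
    -- compatibility: ≺ ∘ T = T = T ∘ ≺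
    (∀ b : M, b ∈ Bool' M → ∀ a : L, a ∈ Bool' L →
      (wI b (box a) ↔ ∃ c ∈ Bool' M, wI b c ∧ wI c (box a))) ∧
    (∀ b : M, b ∈ Bool' M → ∀ a : L, a ∈ Bool' L →
      (wI b (box a) ↔ ∃ c ∈ Bool' L, wI b (box c) ∧ wI c a)) := by
  refine ⟨wI_bot_left _, hbox.1.symm ▸ wI_top_right ⊤, ?_, ?_, ?_, ?_, ?_⟩
  · intro b b' _ _ a _ h h'
    simpa only [pc_eq_compl, wI_compl_compl_left] using h.sup_left h'
  · intro b _ a a' _ _ h h'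
    exact hbox.2.1 a a' ▸ h.inf_right h'
  · intro b b' _ _ a a' _ _ hb h ha
    exact (h.mono_left hb).mono_right (hbox.monotone ha)
  · refine fun b _ a _ => ⟨fun h => ?_, fun ⟨c, _, hbc, hca⟩ => hbc.mono_right hca.le⟩
    obtain ⟨c, hbc, hca⟩ := hrM.exists_wI_wI hcM h
    exact ⟨cᶜᶜ, compl_compl_mem_bool' c, hbc.mono_right le_compl_compl,
      wI_compl_compl_left.mpr hca⟩
  · refine fun b _ a _ =>
      ⟨fun h => ?_, fun ⟨c, _, hbc, hca⟩ => hbc.mono_right (hbox.monotone hca.le)⟩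
    obtain ⟨c, hbc, hca⟩ := hbox.exists_wI_wI hrL hcM h
    exact ⟨cᶜᶜ, compl_compl_mem_bool' c, hbc.mono_right (hbox.monotone le_compl_compl),
      wI_compl_compl_left.mpr hca⟩

/-- for a preframe homomorphism `□ : L → M` between compact
regular frames, the relation `b T a` iff `b ≺ □a` is a compatible subordination
from the booleanization of `M` to the booleanization of `L`. -/
theorem stmt7 {L M : Type*} [Order.Frame L] [Order.Frame M]
    (hcL : IsCompactElement (⊤ : L)) (hrL : IsRegularFrame L)
    (hcM : IsCompactElement (⊤ : M)) (hrM : IsRegularFrame M)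
    (box : L → M) (hbox : IsPreframeHom box) :
    -- T is a subordination on the booleanizations (axioms S1–S4):
    wI (⊥ : M) (box ⊥) ∧
    wI (⊤ : M) (box ⊤) ∧
    (∀ b b' : M, b ∈ Bool' M → b' ∈ Bool' M → ∀ a : L, a ∈ Bool' L →
      wI b (box a) → wI b' (box a) → wI (pc (pc (b ⊔ b'))) (box a)) ∧
    (∀ b : M, b ∈ Bool' M → ∀ a a' : L, a ∈ Bool' L → a' ∈ Bool' L →
      wI b (box a) → wI b (box a') → wI b (box (a ⊓ a'))) ∧
    (∀ b b' : M, b ∈ Bool' M → b' ∈ Bool' M → ∀ a a' : L, a ∈ Bool' L → a' ∈ Bool' L →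
      b ≤ b' → wI b' (box a) → a ≤ a' → wI b (box a')) ∧
    -- compatibility: ≺ ∘ T = T = T ∘ ≺
    (∀ b : M, b ∈ Bool' M → ∀ a : L, a ∈ Bool' L →
      (wI b (box a) ↔ ∃ c ∈ Bool' M, wI b c ∧ wI c (box a))) ∧
    (∀ b : M, b ∈ Bool' M → ∀ a : L, a ∈ Bool' L →
      (wI b (box a) ↔ ∃ c ∈ Bool' L, wI b (box c) ∧ wI c a)) :=
  stmt7_general hrL hcM hrM box hbox
end

section
/- Let (B,S) be an S5-subordination algebra and I a round ideal. Then I is a normal round ideal (I = I**) if and only if I = S⁻¹[L(S[U(I)])], where U denotes upper bounds and L lower bounds. -/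
open Set

/-! Normality is the equation `I** = I` with `I** = ¬S[U(¬S[U(I)])]`. The outer complement
passes through `S` as `¬S[X] = S⁻¹[¬X]` (because `a S b → ¬b S ¬a`), then through `U`, turning it
into `L`, and finally cancels the inner complement. -/

section

variable {B : Type*} [BooleanAlgebra B]

theorem mem_complSet {X : Set B} {b : B} : b ∈ complSet X ↔ bᶜ ∈ X :=
  mem_compl_image b X

theorem complSet_complSet (X : Set B) : complSet (complSet X) = X := by
  ext b
  simp only [mem_complSet, compl_compl]

theorem complSet_upperBounds (X : Set B) :
    complSet (upperBounds X) = lowerBounds (complSet X) := by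
  ext b
  simp only [mem_complSet, mem_upperBounds, mem_lowerBounds]
  constructor
  · intro hb y hy
    exact compl_le_compl_iff_le.mp (hb _ hy)
  · intro hb x hx
    exact le_compl_comm.mp (hb xᶜ (by rwa [compl_compl]))

theorem complSet_relImg {S : B → B → Prop} (hS : ∀ a b, S a b → S bᶜ aᶜ) (X : Set B) :
    complSet (relImg S X) = relPre S (complSet X) := by
  ext b
  simp only [mem_complSet, relImg, relPre, mem_ofPred_eq]
  constructor
  · rintro ⟨x, hx, hxb⟩
    exact ⟨xᶜ, by rwa [compl_compl], by simpa using hS _ _ hxb⟩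
  · rintro ⟨y, hy, hby⟩
    exact ⟨yᶜ, hy, hS _ _ hby⟩

theorem pstar_pstar {S : B → B → Prop} (hS : ∀ a b, S a b → S bᶜ aᶜ) (I : Set B) :
    pstar S (pstar S I) = relPre S (lowerBounds (relImg S (upperBounds I))) := by
  rw [pstar, pstar, complSet_relImg hS, complSet_upperBounds, complSet_complSet]

end

theorem stmt9_general {B : Type*} [BooleanAlgebra B] (S : B → B → Prop) (hS : IsS5Sub S)
    (I : Set B) :
    pstar S (pstar S I) = I ↔
      I = relPre S (lowerBounds (relImg S (upperBounds I))) := by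
  rw [pstar_pstar hS.compl_rel I, eq_comm]

/-- a round ideal `I` is normal (`I = I**`) iff
`I = S⁻¹[L(S[U(I)])]`. -/
theorem stmt9 {B : Type*} [BooleanAlgebra B] (S : B → B → Prop) (hS : IsS5Sub S)
    (I : Set B) (hI : IsRoundIdeal S I) :
    pstar S (pstar S I) = I ↔
      I = relPre S (lowerBounds (relImg S (upperBounds I))) :=
  stmt9_general S hS I
end

section
/- Let (B,S) be a de Vries algebra (a compingent algebra on a complete boolean algebra). Then the map ι : B → NI(B) sending b to S⁻¹[b] = {a | a S b} is a structure-preserving bijection: it is a boolean isomorphism onto the normal round ideals, and a S b if and only if ι(a) ≺ ι(b). -/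
open Set

/-! In a de Vries algebra every element is the join of the elements subordinated to it. Hence
the pseudocomplement of a round ideal `I` is `S⁻¹[(⋁ I)ᶜ]`, so `I** = S⁻¹[⋁ I]`: the normal round
ideals are exactly the sets `S⁻¹[b]`, and `b` is recovered from `S⁻¹[b]` as its join. -/

namespace IsS5Sub

variable {B : Type*} {S : B → B → Prop}

theorem rel_compl_iff [BooleanAlgebra B] (hS : IsS5Sub S) {a b : B} : S a bᶜ ↔ S b aᶜ :=
  ⟨fun h => by simpa using hS.compl_rel _ _ h, fun h => by simpa using hS.compl_rel _ _ h⟩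

theorem isRoundIdeal_setOf_rel [BooleanAlgebra B] (hS : IsS5Sub S) (b : B) :
    IsRoundIdeal S {a | S a b} := by
  refine ⟨⟨hS.mono ⊥ ⊥ ⊥ b le_rfl hS.rel_bot bot_le,
    fun x y hxy hy => hS.mono x y b b hxy hy le_rfl, fun x y => hS.sup_left x y b⟩, ?_⟩
  ext a
  constructor
  · rintro ⟨x, hxb, hax⟩
    exact hS.mono a a x b le_rfl hax (hS.le_of_rel _ _ hxb)
  · intro hab
    obtain ⟨c, hac, hcb⟩ := hS.dense a b hab
    exact ⟨c, hcb, hac⟩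

variable [CompleteBooleanAlgebra B]

theorem sSup_setOf_rel (hS : IsS5Sub S) (h8 : ∀ a : B, a ≠ ⊥ → ∃ b : B, b ≠ ⊥ ∧ S b a)
    (b : B) : sSup {x | S x b} = b := by
  refine le_antisymm (sSup_le fun x hx => hS.le_of_rel _ _ hx) ?_
  set c := sSup {x | S x b}
  by_contra hbc
  obtain ⟨d, hd, hdbc⟩ := h8 (b \ c) fun h => hbc (sdiff_eq_bot_iff.mp h)
  have hdc : d ≤ c := le_sSup (hS.mono d d (b \ c) b le_rfl hdbc sdiff_le)
  exact hd ((disjoint_sdiff_self_right.mono_left hdc).eq_bot_of_le (hS.le_of_rel _ _ hdbc))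

theorem pstar_eq (hS : IsS5Sub S) (I : Set B) : pstar S I = {y | S y (sSup I)ᶜ} := by
  ext y
  simp only [pstar, complSet, relImg, mem_image, mem_ofPred_eq]
  constructor
  · rintro ⟨x, ⟨u, hu, hux⟩, rfl⟩
    exact hS.compl_rel _ _ (hS.mono _ u _ _ (sSup_le hu) hux le_rfl)
  · intro hy
    exact ⟨yᶜ, ⟨sSup I, fun x hx => le_sSup hx, hS.rel_compl_iff.mp hy⟩, compl_compl y⟩

theorem pstar_pstar (hS : IsS5Sub S) (h8 : ∀ a : B, a ≠ ⊥ → ∃ b : B, b ≠ ⊥ ∧ S b a)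
    (I : Set B) : pstar S (pstar S I) = {y | S y (sSup I)} := by
  rw [hS.pstar_eq, hS.pstar_eq, hS.sSup_setOf_rel h8, compl_compl]

theorem le_iff_setOf_rel_subset (hS : IsS5Sub S)
    (h8 : ∀ a : B, a ≠ ⊥ → ∃ b : B, b ≠ ⊥ ∧ S b a) (a b : B) :
    a ≤ b ↔ {x | S x a} ⊆ {x | S x b} := by
  refine ⟨fun hab x hx => hS.mono x x a b le_rfl hx hab, fun h => ?_⟩
  rw [← hS.sSup_setOf_rel h8 a, ← hS.sSup_setOf_rel h8 b]
  exact sSup_le_sSup h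

theorem rel_iff_precR (hS : IsS5Sub S) (h8 : ∀ a : B, a ≠ ⊥ → ∃ b : B, b ≠ ⊥ ∧ S b a)
    (a b : B) : S a b ↔ precR {x | S x a} {x | S x b} := by
  constructor
  · intro hab
    obtain ⟨c, hac, hcb⟩ := hS.dense a b hab
    exact ⟨c, fun x hx => (hS.le_of_rel _ _ hx).trans (hS.le_of_rel _ _ hac), hcb⟩
  · rintro ⟨u, hu, hub⟩
    have hau : a ≤ u := hS.sSup_setOf_rel h8 a ▸ sSup_le hu
    exact hS.mono a u b b hau hub le_rfl

end IsS5Sub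

/-- for a de Vries algebra `(B,S)`, the map `ι b = S⁻¹[b]` is a
structure-preserving bijection from `B` onto the normal round ideals:
an order isomorphism onto `NI(B)` with `a S b ↔ ι(a) ≺ ι(b)`. -/
theorem stmt13 {B : Type*} [CompleteBooleanAlgebra B] (S : B → B → Prop)
    (hS : IsS5Sub S)
    (h8 : ∀ a : B, a ≠ ⊥ → ∃ b : B, b ≠ ⊥ ∧ S b a) :
    (∀ b : B, IsNormalRoundIdeal S {a : B | S a b}) ∧
    (∀ a b : B, a ≤ b ↔ {x : B | S x a} ⊆ {x : B | S x b}) ∧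
    (∀ I : Set B, IsNormalRoundIdeal S I → ∃ b : B, {x : B | S x b} = I) ∧
    (∀ a b : B, S a b ↔ precR {x : B | S x a} {x : B | S x b}) := by
  refine ⟨fun b => ⟨hS.isRoundIdeal_setOf_rel b, ?_⟩, hS.le_iff_setOf_rel_subset h8,
    fun I hI => ⟨sSup I, ?_⟩, hS.rel_iff_precR h8⟩
  · rw [hS.pstar_pstar h8, hS.sSup_setOf_rel h8]
  · rw [← hS.pstar_pstar h8, hI.2]
end

section
/- Let T : (B₁,S₁) → (B₂,S₂) be a compatible subordination between S5-subordination algebras. The following are equivalent: (1) for all b₁ S₂ b₂ there is a with b₁ T̃ a and T̃[b₂] ⊆ S₁[a]; (2) for all b₁ S₂ b₂ there is a with b₁ T̃ a and a a lower bound of T̃[b₂]; (3) for all b₁ S₂ b₂ there is a ∈ T⁻¹[b₂] which is an upper bound of T⁻¹[b₁]. Here T̃ is defined by b T̃ a iff ¬a T ¬b. -/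
/-!
Since `S₁ ⊆ ≤`, (1) gives (2). Conversely, compatibility `T ∘ S₁ = T` dualises to
`T̃ = S₁ ∘ T̃`, so a witness `a` of (2) can be shrunk to some `c` with `b₁ T̃ c` and `c S₁ a`,
and then `c S₁ a ≤ a'` gives (1). Finally, complementation is an order-reversing involution
turning `T̃` into `T`, and `b₁ S₂ b₂` iff `¬b₂ S₂ ¬b₁`; so (2) for the pair `¬b₂, ¬b₁` is (3)
for `b₁, b₂`.
-/

open Set

section Subordination

variable {B₁ B₂ : Type*} [BooleanAlgebra B₁] [BooleanAlgebra B₂]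

theorem exists_relDual_rel_of_relComp_eq {S₁ : B₁ → B₁ → Prop} {T : B₁ → B₂ → Prop}
    (hS₁ : ∀ a a', S₁ a a' → S₁ a'ᶜ aᶜ) (hT : relComp T S₁ = T) {b : B₂} {a : B₁}
    (hba : relDual T b a) : ∃ c, relDual T b c ∧ S₁ c a := by
  obtain ⟨z, hz, hzb⟩ : relComp T S₁ aᶜ bᶜ := hT.symm ▸ hba
  refine ⟨zᶜ, ?_, ?_⟩
  · simpa only [relDual, compl_compl] using hzb
  · simpa only [compl_compl] using hS₁ _ _ hz

theorem exists_relDual_lowerBound_iff (T : B₁ → B₂ → Prop) (b₁ b₂ : B₂) :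
    (∃ a, relDual T b₁ a ∧ a ∈ lowerBounds {a' | relDual T b₂ a'}) ↔
      ∃ a, T a b₁ᶜ ∧ a ∈ upperBounds {a' | T a' b₂ᶜ} := by
  constructor
  · rintro ⟨a, ha, hlb⟩
    refine ⟨aᶜ, ha, fun a' ha' => le_compl_comm.mp (hlb ?_)⟩
    simpa only [mem_ofPred_eq, relDual, compl_compl] using ha'
  · rintro ⟨a, ha, hub⟩
    refine ⟨aᶜ, by simpa only [relDual, compl_compl] using ha, fun a' ha' => ?_⟩
    exact compl_le_iff_compl_le.mp (hub ha')

theorem exists_relDual_rel_iff_lowerBound {S₁ : B₁ → B₁ → Prop} {T : B₁ → B₂ → Prop}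
    (hS₁ : IsS5Sub S₁) (hT : relComp T S₁ = T) (b₁ b₂ : B₂) :
    (∃ a, relDual T b₁ a ∧ ∀ a', relDual T b₂ a' → S₁ a a') ↔
      ∃ a, relDual T b₁ a ∧ a ∈ lowerBounds {a' | relDual T b₂ a'} := by
  constructor
  · rintro ⟨a, ha, hS⟩
    exact ⟨a, ha, fun a' ha' => hS₁.le_of_rel _ _ (hS a' ha')⟩
  · rintro ⟨a, ha, hlb⟩
    obtain ⟨c, hc, hca⟩ := exists_relDual_rel_of_relComp_eq hS₁.compl_rel hT ha
    exact ⟨c, hc, fun a' ha' => hS₁.mono _ _ _ _ le_rfl hca (hlb ha')⟩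

theorem forall_exists_relDual_lowerBound_iff {S₂ : B₂ → B₂ → Prop} (T : B₁ → B₂ → Prop)
    (hS₂ : ∀ b b', S₂ b b' → S₂ b'ᶜ bᶜ) :
    (∀ b₁ b₂, S₂ b₁ b₂ → ∃ a, relDual T b₁ a ∧ a ∈ lowerBounds {a' | relDual T b₂ a'}) ↔
      ∀ b₁ b₂, S₂ b₁ b₂ → ∃ a, T a b₂ ∧ a ∈ upperBounds {a' | T a' b₁} := by
  constructor
  · intro h b₁ b₂ hb
    simpa only [compl_compl] using
      (exists_relDual_lowerBound_iff T b₂ᶜ b₁ᶜ).mp (h _ _ (hS₂ _ _ hb))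
  · intro h b₁ b₂ hb
    exact (exists_relDual_lowerBound_iff T b₁ b₂).mpr (h _ _ (hS₂ _ _ hb))

end Subordination

/-- equivalent formulations of continuity of a compatible
subordination `T : (B₁,S₁) → (B₂,S₂)`. -/
theorem stmt15 {B₁ B₂ : Type*} [BooleanAlgebra B₁] [BooleanAlgebra B₂]
    (S₁ : B₁ → B₁ → Prop) (S₂ : B₂ → B₂ → Prop)
    (hS₁ : IsS5Sub S₁) (hS₂ : IsS5Sub S₂)
    (T : B₁ → B₂ → Prop) (hT : IsCompat S₁ S₂ T) :
    ((∀ b₁ b₂ : B₂, S₂ b₁ b₂ →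
        ∃ a : B₁, relDual T b₁ a ∧ ∀ a' : B₁, relDual T b₂ a' → S₁ a a') ↔
     (∀ b₁ b₂ : B₂, S₂ b₁ b₂ →
        ∃ a : B₁, relDual T b₁ a ∧ a ∈ lowerBounds {a' : B₁ | relDual T b₂ a'})) ∧
    ((∀ b₁ b₂ : B₂, S₂ b₁ b₂ →
        ∃ a : B₁, relDual T b₁ a ∧ a ∈ lowerBounds {a' : B₁ | relDual T b₂ a'}) ↔
     (∀ b₁ b₂ : B₂, S₂ b₁ b₂ →
        ∃ a : B₁, T a b₂ ∧ a ∈ upperBounds {a' : B₁ | T a' b₁})) :=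
  ⟨forall₃_congr fun b₁ b₂ _ => exists_relDual_rel_iff_lowerBound hS₁ hT.2.2 b₁ b₂,
    forall_exists_relDual_lowerBound_iff T hS₂.compl_rel⟩
end

section
/- Let T₁ : (B₁,S₁) → (B₂,S₂) and T₂ : (B₂,S₂) → (B₃,S₃) be continuous compatible subordinations between S5-subordination algebras. Then the relational composition T₂ ∘ T₁ : (B₁,S₁) → (B₃,S₃) is a continuous compatible subordination. Moreover, the identity S : (B,S) → (B,S) is continuous. -/
open Set

/-!
Compatibility of `T₂ ∘ T₁` follows from associativity of relational composition. For continuity,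
dualising reverses composition, `(T₂ ∘ T₁)~ = T̃₁ ∘ T̃₂`, and an S5-subordination is self-dual, so
compatibility of `T` with `S₂` transfers to `T̃`. Continuity of `T₂` at `b₁ S₃ b₂` gives `a₂`;
writing `b₁ T̃₂ n S₂ a₂`, continuity of `T₁` at `n S₂ a₂` gives the required witness.
-/

section

variable {B₁ B₂ B₃ B₄ : Type*}

theorem relComp_assoc (T₁ : B₁ → B₂ → Prop) (T₂ : B₂ → B₃ → Prop) (T₃ : B₃ → B₄ → Prop) :
    relComp T₃ (relComp T₂ T₁) = relComp (relComp T₃ T₂) T₁ := by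
  ext a d
  exact ⟨fun ⟨c, ⟨b, hab, hbc⟩, hcd⟩ => ⟨b, hab, c, hbc, hcd⟩,
    fun ⟨b, hab, c, hbc, hcd⟩ => ⟨c, ⟨b, hab, hbc⟩, hcd⟩⟩

variable [BooleanAlgebra B₁] [BooleanAlgebra B₂] [BooleanAlgebra B₃]

theorem relDual_relComp (T₁ : B₁ → B₂ → Prop) (T₂ : B₂ → B₃ → Prop) :
    relDual (relComp T₂ T₁) = relComp (relDual T₁) (relDual T₂) := by
  ext c a
  simp only [relDual, relComp]
  exact ⟨fun ⟨b, hab, hbc⟩ => ⟨bᶜ, by rwa [compl_compl], by rwa [compl_compl]⟩,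
    fun ⟨b, hbc, hab⟩ => ⟨bᶜ, hab, hbc⟩⟩

theorem IsS5Sub.relDual_eq {S : B₁ → B₁ → Prop} (hS : IsS5Sub S) : relDual S = S := by
  ext b a
  refine ⟨fun h => ?_, hS.compl_rel b a⟩
  simpa only [compl_compl] using hS.compl_rel _ _ h

theorem IsSubord.comp {T₁ : B₁ → B₂ → Prop} {T₂ : B₂ → B₃ → Prop}
    (h₁ : IsSubord T₁) (h₂ : IsSubord T₂) : IsSubord (relComp T₂ T₁) where
  rel_bot := ⟨⊥, h₁.rel_bot, h₂.rel_bot⟩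
  rel_top := ⟨⊤, h₁.rel_top, h₂.rel_top⟩
  sup_left := by
    rintro a b c ⟨m, ham, hmc⟩ ⟨n, hbn, hnc⟩
    exact ⟨m ⊔ n, h₁.sup_left _ _ _ (h₁.mono _ _ _ _ le_rfl ham le_sup_left)
      (h₁.mono _ _ _ _ le_rfl hbn le_sup_right), h₂.sup_left _ _ _ hmc hnc⟩
  inf_right := by
    rintro a c d ⟨m, ham, hmc⟩ ⟨n, han, hnd⟩
    exact ⟨m ⊓ n, h₁.inf_right _ _ _ ham han, h₂.inf_right _ _ _
      (h₂.mono _ _ _ _ inf_le_left hmc le_rfl) (h₂.mono _ _ _ _ inf_le_right hnd le_rfl)⟩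
  mono := by
    rintro a b c d hab ⟨m, hbm, hmc⟩ hcd
    exact ⟨m, h₁.mono _ _ _ _ hab hbm le_rfl, h₂.mono _ _ _ _ le_rfl hmc hcd⟩

theorem IsCompat.comp {S₁ : B₁ → B₁ → Prop} {S₂ : B₂ → B₂ → Prop} {S₃ : B₃ → B₃ → Prop}
    {T₁ : B₁ → B₂ → Prop} {T₂ : B₂ → B₃ → Prop}
    (h₁ : IsCompat S₁ S₂ T₁) (h₂ : IsCompat S₂ S₃ T₂) : IsCompat S₁ S₃ (relComp T₂ T₁) :=
  ⟨h₁.1.comp h₂.1, by rw [relComp_assoc, h₂.2.1], by rw [← relComp_assoc, h₁.2.2]⟩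

theorem IsContinuousSub.comp {S₁ : B₁ → B₁ → Prop} {S₂ : B₂ → B₂ → Prop}
    {S₃ : B₃ → B₃ → Prop} {T₁ : B₁ → B₂ → Prop} {T₂ : B₂ → B₃ → Prop}
    (h₁ : IsContinuousSub S₁ S₂ T₁) (h₂ : IsContinuousSub S₂ S₃ T₂)
    (hT₁ : relComp (relDual T₁) S₂ = relDual T₁) (hT₂ : relComp S₂ (relDual T₂) = relDual T₂) :
    IsContinuousSub S₁ S₃ (relComp T₂ T₁) := by
  intro b₁ b₂ hb
  rw [relDual_relComp]
  obtain ⟨a₂, hb₁a₂, hb₂⟩ := h₂ b₁ b₂ hb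
  rw [← hT₂] at hb₁a₂
  obtain ⟨n, hb₁n, hna₂⟩ := hb₁a₂
  obtain ⟨a, hna, ha₂⟩ := h₁ n a₂ hna₂
  refine ⟨a, ⟨n, hb₁n, hna⟩, ?_⟩
  rintro a' ⟨m, hb₂m, hma'⟩
  exact ha₂ a' (hT₁ ▸ ⟨m, hb₂ m hb₂m, hma'⟩)

theorem IsS5Sub.isContinuousSub_self {S : B₁ → B₁ → Prop} (hS : IsS5Sub S) :
    IsContinuousSub S S S := by
  intro b₁ b₂ hb
  simp only [hS.relDual_eq]
  obtain ⟨c, hb₁c, hcb₂⟩ := hS.dense _ _ hb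
  exact ⟨c, hb₁c, fun a' hb₂a' => hS.mono _ _ _ _ le_rfl hcb₂ (hS.le_of_rel _ _ hb₂a')⟩

end

theorem stmt16_general {B₁ B₂ B₃ : Type*}
    [BooleanAlgebra B₁] [BooleanAlgebra B₂] [BooleanAlgebra B₃]
    (S₁ : B₁ → B₁ → Prop) (S₂ : B₂ → B₂ → Prop) (S₃ : B₃ → B₃ → Prop)
    (hS₂ : IsS5Sub S₂)
    (T₁ : B₁ → B₂ → Prop) (T₂ : B₂ → B₃ → Prop)
    (hT₁ : IsCompat S₁ S₂ T₁) (hT₂ : IsCompat S₂ S₃ T₂)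
    (hc₁ : IsContinuousSub S₁ S₂ T₁) (hc₂ : IsContinuousSub S₂ S₃ T₂) :
    IsCompat S₁ S₃ (relComp T₂ T₁) ∧
    IsContinuousSub S₁ S₃ (relComp T₂ T₁) ∧
    (∀ {B : Type*} [BooleanAlgebra B] (S : B → B → Prop),
      IsS5Sub S → IsContinuousSub S S S) := by
  have hdual₁ : relComp (relDual T₁) S₂ = relDual T₁ := by
    rw [← hS₂.relDual_eq, ← relDual_relComp, hT₁.2.1]
  have hdual₂ : relComp S₂ (relDual T₂) = relDual T₂ := by
    rw [← hS₂.relDual_eq, ← relDual_relComp, hT₂.2.2]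
  exact ⟨hT₁.comp hT₂, hc₁.comp hc₂ hdual₁ hdual₂, fun _ hS => hS.isContinuousSub_self⟩

/-- the composition of continuous compatible subordinations is a
continuous compatible subordination, and the identity `S : (B,S) → (B,S)` is
continuous. -/
theorem stmt16 {B₁ B₂ B₃ : Type*}
    [BooleanAlgebra B₁] [BooleanAlgebra B₂] [BooleanAlgebra B₃]
    (S₁ : B₁ → B₁ → Prop) (S₂ : B₂ → B₂ → Prop) (S₃ : B₃ → B₃ → Prop)
    (hS₁ : IsS5Sub S₁) (hS₂ : IsS5Sub S₂) (hS₃ : IsS5Sub S₃)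
    (T₁ : B₁ → B₂ → Prop) (T₂ : B₂ → B₃ → Prop)
    (hT₁ : IsCompat S₁ S₂ T₁) (hT₂ : IsCompat S₂ S₃ T₂)
    (hc₁ : IsContinuousSub S₁ S₂ T₁) (hc₂ : IsContinuousSub S₂ S₃ T₂) :
    IsCompat S₁ S₃ (relComp T₂ T₁) ∧
    IsContinuousSub S₁ S₃ (relComp T₂ T₁) ∧
    (∀ {B : Type*} [BooleanAlgebra B] (S : B → B → Prop),
      IsS5Sub S → IsContinuousSub S S S) :=
  stmt16_general S₁ S₂ S₃ hS₂ T₁ T₂ hT₁ hT₂ hc₁ hc₂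
end

section
/- Let T : (B₁,S₁) → (B₂,S₂) be a compatible subordination between S5-subordination algebras. Then T is functional (meaning T̃ ∘ T ⊆ S₁ and S₂ ⊆ T ∘ T̃, where b T̃ a iff ¬a T ¬b) if and only if: (a) a T 0 implies a = 0; and (b) whenever a T (b₁ ∨ b₂), b₁ S₂ b₁′, and b₂ S₂ b₂′, there exist a₁, a₂ ∈ B₁ with a S₁ (a₁ ∨ a₂), a₁ T b₁′, and a₂ T b₂′ — given that condition (a) is equivalent to T̃ ∘ T ⊆ S₁. -/
open Set

/- Condition (b) of the theorem. -/
def SplitsJoins {B₁ B₂ : Type*} [BooleanAlgebra B₁] [BooleanAlgebra B₂]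
    (S₁ : B₁ → B₁ → Prop) (S₂ : B₂ → B₂ → Prop) (T : B₁ → B₂ → Prop) : Prop :=
  ∀ (a : B₁) (b₁ b₂ b₁' b₂' : B₂), T a (b₁ ⊔ b₂) → S₂ b₁ b₁' → S₂ b₂ b₂' →
    ∃ a₁ a₂ : B₁, S₁ a (a₁ ⊔ a₂) ∧ T a₁ b₁' ∧ T a₂ b₂'

namespace IsSubord

variable {B₁ B₂ : Type*} [BooleanAlgebra B₁] [BooleanAlgebra B₂] {T : B₁ → B₂ → Prop}

theorem relDual_sup (hT : IsSubord T) {b₁ b₂ : B₂} {a₁ a₂ : B₁}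
    (h₁ : relDual T b₁ a₁) (h₂ : relDual T b₂ a₂) : relDual T (b₁ ⊔ b₂) (a₁ ⊔ a₂) := by
  have h₁' : T (a₁ ⊔ a₂)ᶜ b₁ᶜ := hT.mono _ _ _ _ (compl_le_compl le_sup_left) h₁ le_rfl
  have h₂' : T (a₁ ⊔ a₂)ᶜ b₂ᶜ := hT.mono _ _ _ _ (compl_le_compl le_sup_right) h₂ le_rfl
  simpa only [relDual, compl_sup] using hT.inf_right _ _ _ h₁' h₂'

theorem splitsJoins_of_le_relComp_relDual {S₁ : B₁ → B₁ → Prop} {S₂ : B₂ → B₂ → Prop}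
    (hT : IsSubord T) (hTS₁ : ∀ a a', relComp (relDual T) T a a' → S₁ a a')
    (hS₂T : ∀ b b', S₂ b b' → relComp T (relDual T) b b') : SplitsJoins S₁ S₂ T := by
  intro a b₁ b₂ b₁' b₂' hab hb₁ hb₂
  obtain ⟨a₁, hb₁a₁, ha₁⟩ := hS₂T b₁ b₁' hb₁
  obtain ⟨a₂, hb₂a₂, ha₂⟩ := hS₂T b₂ b₂' hb₂
  exact ⟨a₁, a₂, hTS₁ _ _ ⟨b₁ ⊔ b₂, hab, hT.relDual_sup hb₁a₁ hb₂a₂⟩, ha₁, ha₂⟩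

/-- Split `⊤ T (e ∨ ¬e)`, for `b S₂ e S₂ b'`, along `e S₂ b'` and `¬e S₂ ¬b`: this gives
`a₁ T b'` and `a₂ T ¬b` with `a₁ ∨ a₂ = ⊤`, so `¬a₂` witnesses `b (T ∘ T̃) b'`. -/
theorem le_relComp_relDual_of_splitsJoins {S₁ : B₁ → B₁ → Prop} {S₂ : B₂ → B₂ → Prop}
    (hT : IsSubord T) (hS₁ : ∀ a a', S₁ a a' → a ≤ a') (hS₂ : IsS5Sub S₂)
    (hsplit : SplitsJoins S₁ S₂ T) {b b' : B₂} (hbb' : S₂ b b') :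
    relComp T (relDual T) b b' := by
  obtain ⟨e, hbe, heb'⟩ := hS₂.dense _ _ hbb'
  have htop : T ⊤ (e ⊔ eᶜ) := by simpa only [sup_compl_eq_top] using hT.rel_top
  obtain ⟨a₁, a₂, hcover, ha₁, ha₂⟩ := hsplit ⊤ e eᶜ b' bᶜ htop heb' (hS₂.compl_rel _ _ hbe)
  have hle : a₂ᶜ ≤ a₁ :=
    codisjoint_iff_compl_le_left.mp (codisjoint_iff_le_sup.mpr (hS₁ _ _ hcover))
  refine ⟨a₂ᶜ, ?_, hT.mono _ _ _ _ hle ha₁ le_rfl⟩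
  simpa only [relDual, compl_compl] using ha₂

end IsSubord

/-- a compatible subordination `T` is functional iff (a) `a T 0`
implies `a = 0`, and (b) the splitting condition for joins holds; given the
known fact that `T̃ ∘ T ⊆ S₁` is equivalent to (a). -/
theorem stmt17 {B₁ B₂ : Type*} [BooleanAlgebra B₁] [BooleanAlgebra B₂]
    (S₁ : B₁ → B₁ → Prop) (S₂ : B₂ → B₂ → Prop)
    (hS₁ : IsS5Sub S₁) (hS₂ : IsS5Sub S₂)
    (T : B₁ → B₂ → Prop) (hT : IsCompat S₁ S₂ T)
    (hknown : (∀ a a' : B₁, relComp (relDual T) T a a' → S₁ a a') ↔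
      (∀ a : B₁, T a ⊥ → a = ⊥)) :
    IsFunctionalSub S₁ S₂ T ↔
      ((∀ a : B₁, T a ⊥ → a = ⊥) ∧
       (∀ (a : B₁) (b₁ b₂ b₁' b₂' : B₂), T a (b₁ ⊔ b₂) → S₂ b₁ b₁' → S₂ b₂ b₂' →
         ∃ a₁ a₂ : B₁, S₁ a (a₁ ⊔ a₂) ∧ T a₁ b₁' ∧ T a₂ b₂')) := by
  have hTsub : IsSubord T := hT.1
  constructor
  · rintro ⟨hTS₁, hS₂T⟩
    exact ⟨hknown.mp hTS₁, hTsub.splitsJoins_of_le_relComp_relDual hTS₁ hS₂T⟩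
  · rintro ⟨hbot, hsplit⟩
    exact ⟨hknown.mpr hbot, fun _ _ ↦
      hTsub.le_relComp_relDual_of_splitsJoins hS₁.le_of_rel hS₂ hsplit⟩
end
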